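/- arXiv:1109.2539 — 2 statements merged into one kernel-verified Lean document; each statement's English description precedes it below -/
import Mathlib

section
/- For 2 ≤ k ≤ N and admissible parameters, k(k-1)(2a+k)(2a+k+1) p_{k,N}(a,b,c) = [(a+b)(a+b+1)(a+c)(a+c+1)(N-1)N / ((b+c-N)(b+c-N+1))] · p_{k-2,N-2}(a+2,b,c). -/
/-- Pochhammer symbol `(a)_k = a(a+1)⋯(a+k-1)`. -/
noncomputable def poch (a : ℝ) (k : ℕ) : ℝ := ∏ i ∈ Finset.range k, (a + i)

/-- Normalizing constant `C_N(a,b,c)` of Wilson's 6-j weights. -/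
noncomputable def wC (N : ℕ) (a b c : ℝ) : ℝ :=
  poch (a - b + 1) N * poch (a - c + 1) N / (poch (2*a + 1) N * poch (-b - c + 1) N)

/-- Wilson's 6-j weight `p_{k,N}(a,b,c)`. -/
noncomputable def wp (k N : ℕ) (a b c : ℝ) : ℝ :=
  wC N a b c *
    (poch (2*a) k * poch (a + 1) k * poch (a + b) k * poch (a + c) k * poch (-(N : ℝ)) k /
      ((k.factorial : ℝ) * poch a k * poch (a - b + 1) k * poch (a - c + 1) k *
        poch (2*a + N + 1) k))

/-- The product of all Pochhammer factors appearing in denominators of `wp k N a b c`. -/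
noncomputable def wpden (k N : ℕ) (a b c : ℝ) : ℝ :=
  poch (2*a + 1) N * poch (-b - c + 1) N * poch a k * poch (a - b + 1) k *
    poch (a - c + 1) k * poch (2*a + N + 1) k

/-!
Write `p_{k,N} = wpnum / (k! · wpden)`. Under `(k, N, a) ↦ (k - 2, N - 2, a + 2)` every Pochhammer
symbol splits as `(x)_{n+2} = (x)_2 (x+2)_n`, so numerator and denominator change by explicit short
Pochhammer factors. The two exceptions are `(2a)_k`, which only becomes such a product after
multiplication by `(2a+k)(2a+k+1)` (the factor on the left of the identity), and
`(2a+1)_N (2a+N+1)_k`, which has to be merged into `(2a+1)_{N+k}` first.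
-/

lemma poch_add (x : ℝ) (m n : ℕ) : poch x (m + n) = poch x m * poch (x + m) n := by
  simp only [poch, Finset.prod_range_add, Nat.cast_add, add_assoc]

lemma poch_two (x : ℝ) : poch x 2 = x * (x + 1) := by
  simp [poch, Finset.prod_range_succ]

lemma poch_add_two (x : ℝ) (n : ℕ) : poch x (n + 2) = poch x 2 * poch (x + 2) n := by
  rw [add_comm, poch_add, Nat.cast_ofNat]

lemma mul_poch_eq_poch_add_two (x : ℝ) (n : ℕ) :
    (x + n) * (x + n + 1) * poch x n = poch x (n + 2) := by
  rw [poch_add, poch_two]; ring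

noncomputable def wpnum (k N : ℕ) (a b c : ℝ) : ℝ :=
  poch (a - b + 1) N * poch (a - c + 1) N * poch (a + 1) k * poch (a + b) k * poch (a + c) k *
    poch (-(N : ℝ)) k * poch (2 * a) k

lemma wp_eq_wpnum_div (k N : ℕ) (a b c : ℝ) :
    wp k N a b c = wpnum k N a b c / (k.factorial * wpden k N a b c) := by
  rw [wp, wC, wpnum, wpden]; ring

lemma wpden_eq (k N : ℕ) (a b c : ℝ) :
    wpden k N a b c = poch (2 * a + 1) (N + k) *
      (poch (-b - c + 1) N * poch a k * poch (a - b + 1) k * poch (a - c + 1) k) := by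
  rw [wpden, poch_add]; ring_nf

lemma wpden_add_two (n N : ℕ) (a b c : ℝ) :
    wpden (n + 2) (N + 2) a b c =
      poch (2 * a + 1) 4 * poch a 2 * poch (-b - c + 1 + N) 2 *
        (poch (a - b + 1) 2 * poch (a - c + 1) 2) * wpden n N (a + 2) b c := by
  rw [wpden_eq, wpden_eq, show N + 2 + (n + 2) = 4 + (N + n) by ring, poch_add _ 4,
    poch_add _ N 2]
  simp only [poch_add_two _ n]
  ring_nf

lemma wpnum_add_two (n N : ℕ) (a b c : ℝ) :
    (2 * a + (n + 2 : ℕ)) * (2 * a + (n + 2 : ℕ) + 1) * wpnum (n + 2) (N + 2) a b c =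
      poch (2 * a) 4 * poch (a + 1) 2 * poch (-(N + 2 : ℕ)) 2 * (poch (a + b) 2 * poch (a + c) 2) *
        (poch (a - b + 1) 2 * poch (a - c + 1) 2) * wpnum n N (a + 2) b c := by
  rw [wpnum, mul_left_comm, mul_poch_eq_poch_add_two, show n + 2 + 2 = 4 + n by ring,
    poch_add (2 * a) 4 n]
  simp only [wpnum, poch_add_two _ n, poch_add_two _ N]
  push_cast
  ring_nf

lemma wpnum_mul_wpden_add_two (n N : ℕ) (a b c : ℝ) :
    (2 * a + (n + 2 : ℕ)) * (2 * a + (n + 2 : ℕ) + 1) * wpnum (n + 2) (N + 2) a b c *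
        ((b + c - (N + 2 : ℕ)) * (b + c - (N + 2 : ℕ) + 1) * wpden n N (a + 2) b c) =
      (a + b) * (a + b + 1) * (a + c) * (a + c + 1) * ((N + 2 : ℕ) - 1) * (N + 2 : ℕ) *
        wpnum n N (a + 2) b c * wpden (n + 2) (N + 2) a b c := by
  have h2a : poch (2 * a) 4 * poch (a + 1) 2 = poch (2 * a + 1) 4 * poch a 2 := by
    simp only [poch, Finset.prod_range_succ, Finset.prod_range_zero]; ring
  rw [wpnum_add_two, wpden_add_two, h2a, poch_two (a + b), poch_two (a + c), poch_two (-_),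
    poch_two (-b - c + 1 + N)]
  push_cast
  ring

theorem wilson_step_two_general (k N : ℕ) (a b c : ℝ) (hk : 2 ≤ k) (hkN : k ≤ N)
    (h1 : wpden k N a b c ≠ 0)
    (h3 : b + c - N ≠ 0) (h4 : b + c - N + 1 ≠ 0) :
    (k : ℝ) * ((k : ℝ) - 1) * (2*a + k) * (2*a + k + 1) * wp k N a b c
      = (a + b) * (a + b + 1) * (a + c) * (a + c + 1) * ((N : ℝ) - 1) * N
          / ((b + c - N) * (b + c - N + 1)) * wp (k - 2) (N - 2) (a + 2) b c := by
  obtain ⟨n, rfl⟩ := Nat.exists_eq_add_of_le' hk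
  obtain ⟨M, rfl⟩ := Nat.exists_eq_add_of_le' (hk.trans hkN)
  have hD : wpden n M (a + 2) b c ≠ 0 := by
    rw [wpden_add_two] at h1
    exact right_ne_zero_of_mul h1
  have key := wpnum_mul_wpden_add_two n M a b c
  rw [Nat.add_sub_cancel, Nat.add_sub_cancel, wp_eq_wpnum_div, wp_eq_wpnum_div, Nat.factorial_succ,
    Nat.factorial_succ]
  push_cast at *
  field_simp
  linear_combination (n + 2 : ℝ) * (n + 1) * key

theorem wilson_step_two (k N : ℕ) (a b c : ℝ) (hk : 2 ≤ k) (hkN : k ≤ N)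
    (h1 : wpden k N a b c ≠ 0) (h2 : wpden (k - 2) (N - 2) (a + 2) b c ≠ 0)
    (h3 : b + c - N ≠ 0) (h4 : b + c - N + 1 ≠ 0) :
    (k : ℝ) * ((k : ℝ) - 1) * (2*a + k) * (2*a + k + 1) * wp k N a b c
      = (a + b) * (a + b + 1) * (a + c) * (a + c + 1) * ((N : ℝ) - 1) * N
          / ((b + c - N) * (b + c - N + 1)) * wp (k - 2) (N - 2) (a + 2) b c :=
  wilson_step_two_general k N a b c hk hkN h1 h3 h4
end

section
/- Let X be a random variable with P(X = j(a+j)) = π_{j,K}(a,b) for j = 0,...,K, where π_{j,K}(a,b) = C(K,j) (a-b+j+1)_{K-j}/(a+2j+1)_{K-j} · (b)_j/(a+j)_j. Then E(X) = Kb and Var(X) = K(K+a-b)b. -/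
/-- The weights `π_{j,K}(a,b)`. -/
noncomputable def piw (j K : ℕ) (a b : ℝ) : ℝ :=
  (K.choose j : ℝ) * (poch (a - b + j + 1) (K - j) / poch (a + 2*j + 1) (K - j)) *
    (poch b j / poch (a + j) j)

/-!
Two identities drive the proof. The size-biasing identity
`(j+1)(a+j+1) π_{j+1,K+1}(a,b) = (K+1) b π_{j,K}(a+2,b+1)` turns `E[X g(j)]` for the
`(a,b,K+1)` law into `(K+1) b E[g(j+1)]` for the `(a+2,b+1,K)` law. Taking `g = 1` gives the
mean; taking `g(j) = j(a+j)` and writing `(j+1)(a+j+1) = j(a+2+j) + (a+1)` reduces `E[X²]` to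
the mean at the shifted parameters, so `E[X²] = Kb((K-1)(b+1) + a + 1)`, whence the variance.

Both steps use `Σ_j π_{j,K}(a+2,b+1) = 1` for every `K`. This follows by induction on `K`, since
`π_{j,K+1} - π_{j,K} = G_K(j) - G_K(j+1)` for an explicit certificate `G_K` (a WZ pair), so the
total mass telescopes.
-/

section Pochhammer

variable (x : ℝ) (k : ℕ)

@[simp] lemma poch_zero : poch x 0 = 1 := Finset.prod_range_zero _

lemma poch_succ : poch x (k + 1) = poch x k * (x + k) := Finset.prod_range_succ _ _

lemma poch_succ' : poch x (k + 1) = x * poch (x + 1) k := by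
  simp only [poch, Finset.prod_range_succ', Nat.cast_add, Nat.cast_one, Nat.cast_zero, add_zero,
    add_assoc, add_comm (1 : ℝ)]
  ring

lemma mul_poch_add_one : x * poch (x + 1) k = poch x k * (x + k) := by
  rw [← poch_succ', poch_succ]

lemma poch_succ_mul_add : poch x (k + 1) * (x + k + 1) = x * (x + 1) * poch (x + 2) k := by
  rw [add_assoc x, ← Nat.cast_add_one, ← poch_succ, poch_succ', poch_succ', add_assoc x 1 1]
  norm_num [mul_assoc]

variable {x}

lemma poch_pos (hx : 0 < x) : 0 < poch x k := Finset.prod_pos fun i _ => by positivity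

lemma poch_add_self_pos {a : ℝ} (ha : -1 < a) (j : ℕ) : 0 < poch (a + j) j :=
  Finset.prod_pos fun i hi => by
    have hj : (1 : ℝ) ≤ j := by exact_mod_cast (Nat.zero_le i).trans_lt (Finset.mem_range.1 hi)
    linarith [i.cast_nonneg (α := ℝ)]

end Pochhammer

section Weights

variable {a : ℝ} (b : ℝ)

lemma piw_eq_div (j K : ℕ) :
    piw j K a b = K.choose j * poch (a - b + j + 1) (K - j) * poch b j /
      (poch (a + 2 * j + 1) (K - j) * poch (a + j) j) := by
  rw [piw]; ring

lemma piw_den_pos (ha : -1 < a) (j K : ℕ) :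
    0 < poch (a + 2 * j + 1) (K - j) * poch (a + j) j :=
  mul_pos (poch_pos _ (by linarith [j.cast_nonneg (α := ℝ)])) (poch_add_self_pos ha j)

lemma piw_succ_right (ha : -1 < a) {j K : ℕ} (hjK : j ≤ K) :
    ((K : ℝ) + 1 - j) * (a + K + j + 1) * piw j (K + 1) a b =
      (K + 1) * (a - b + K + 1) * piw j K a b := by
  obtain ⟨m, rfl⟩ := Nat.exists_eq_add_of_le hjK
  have hchoose : ((j + m).choose j : ℝ) * (j + m + 1) = (j + m + 1).choose j * (m + 1) := by
    have h := Nat.choose_mul_succ_eq (j + m) j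
    rw [show j + m + 1 - j = m + 1 by omega] at h
    exact_mod_cast h
  simp only [piw_eq_div]
  rw [mul_div_assoc', mul_div_assoc',
    div_eq_div_iff (piw_den_pos ha j _).ne' (piw_den_pos ha j _).ne',
    show j + m + 1 - j = m + 1 by omega, Nat.add_sub_cancel_left, poch_succ, poch_succ]
  push_cast
  grind

lemma piw_succ_self (K : ℕ) : piw (K + 1) K a b = 0 := by
  simp [piw]

/-- `piwFlux K a b (j + 1) = π_{j,K} (b+j)(a+j) / ((a+2j)(a+K+j+1))` is the mass passing from `j`
to `j + 1` when `K` grows; it is written without the factor `a + 2j`, which vanishes at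
`j = a = 0`. -/
noncomputable def piwFlux (K : ℕ) (a b : ℝ) : ℕ → ℝ
  | 0 => 0
  | j + 1 => K.choose j * poch (a - b + j + 1) (K - j) * poch b (j + 1) /
      (poch (a + 2 * j + 1) (K - j) * poch (a + j + 1) j * (a + K + j + 1))

@[simp] lemma piwFlux_zero (K : ℕ) : piwFlux K a b 0 = 0 := rfl

lemma piwFlux_succ_succ_self (K : ℕ) : piwFlux K a b (K + 2) = 0 := by
  simp [piwFlux]

lemma piwFlux_den_pos (ha : -1 < a) (j K : ℕ) :
    0 < poch (a + 2 * j + 1) (K - j) * poch (a + j + 1) j * (a + K + j + 1) := by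
  have := j.cast_nonneg (α := ℝ)
  have := K.cast_nonneg (α := ℝ)
  exact mul_pos (mul_pos (poch_pos _ (by linarith)) (poch_pos _ (by linarith))) (by linarith)

lemma piwFlux_one (ha : -1 < a) (K : ℕ) : (a + K + 1) * piwFlux K a b 1 = b * piw 0 K a b := by
  simp only [piwFlux, piw_eq_div]
  rw [mul_div_assoc', mul_div_assoc',
    div_eq_div_iff (piwFlux_den_pos ha 0 K).ne' (piw_den_pos ha 0 K).ne']
  simp only [Nat.choose_zero_right, Nat.sub_zero, Nat.cast_zero, Nat.cast_one, poch_zero, zero_add,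
    poch_succ]
  ring

lemma piwFlux_succ (ha : -1 < a) {j K : ℕ} (hjK : j < K) :
    ((K : ℝ) - j) * (a + 2 * j + 2) * piwFlux K a b (j + 1) =
      (j + 1) * (a - b + j + 1) * piw (j + 1) K a b := by
  obtain ⟨m, rfl⟩ := Nat.exists_eq_add_of_lt hjK
  have hchoose : ((j + m + 1).choose (j + 1) : ℝ) * (j + 1) = (j + m + 1).choose j * (m + 1) := by
    have h := Nat.choose_succ_right_eq (j + m + 1) j
    rw [show j + m + 1 - j = m + 1 by omega] at h
    exact_mod_cast h
  have hnum := poch_succ' (a - b + j + 1) m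
  have hden := poch_succ_mul_add (a + 2 * j + 1) m
  have hlow := poch_succ (a + j + 1) j
  simp only [piwFlux, piw_eq_div]
  rw [mul_div_assoc', mul_div_assoc',
    div_eq_div_iff (piwFlux_den_pos ha j _).ne' (piw_den_pos ha (j + 1) _).ne',
    show j + m + 1 - j = m + 1 by omega, show j + m + 1 - (j + 1) = m by omega]
  push_cast at *
  grind

lemma piwFlux_succ_succ (ha : -1 < a) (j K : ℕ) :
    (a + 2 * j + 2) * (a + K + j + 2) * piwFlux K a b (j + 2) =
      (b + j + 1) * (a + j + 1) * piw (j + 1) K a b := by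
  have hb := poch_succ b (j + 1)
  have hlow := mul_poch_add_one (a + (j + 1 : ℕ)) (j + 1)
  simp only [piwFlux, piw_eq_div]
  rw [mul_div_assoc', mul_div_assoc',
    div_eq_div_iff (piwFlux_den_pos ha (j + 1) K).ne' (piw_den_pos ha (j + 1) K).ne']
  push_cast at *
  grind

lemma piw_self_eq_piwFlux (K : ℕ) : piw (K + 1) (K + 1) a b = piwFlux K a b (K + 1) := by
  simp [piw, piwFlux, poch_succ, ← add_assoc, add_right_comm _ (K : ℝ) 1]

lemma piw_succ_sub_piw (ha : -1 < a) {j K : ℕ} (hj : j ≤ K + 1) :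
    piw j (K + 1) a b - piw j K a b = piwFlux K a b j - piwFlux K a b (j + 1) := by
  have hK := K.cast_nonneg (α := ℝ)
  rcases j with _ | i
  · have hA := piw_succ_right b ha (Nat.zero_le K)
    have hC := piwFlux_one b ha K
    push_cast at hA
    have hD : ((K : ℝ) + 1) * (a + K + 1) ≠ 0 := mul_ne_zero (by linarith) (by linarith)
    rw [piwFlux_zero]
    apply mul_left_cancel₀ hD
    linear_combination hA + ((K : ℝ) + 1) * hC
  rcases (Nat.lt_succ_iff.1 hj).lt_or_eq with hiK | rfl
  · -- By the three preceding lemmas every term is a multiple of `piw (i + 1) K a b`.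
    have hA := piw_succ_right b ha hiK
    have hB := piwFlux_succ b ha hiK
    have hC := piwFlux_succ_succ b ha i K
    push_cast at hA
    have hi : (i : ℝ) < K := by exact_mod_cast hiK
    have hD : ((K : ℝ) - i) * (a + 2 * i + 2) * (a + K + i + 2) ≠ 0 :=
      mul_ne_zero (mul_ne_zero (by linarith) (by linarith)) (by linarith)
    apply mul_left_cancel₀ hD
    linear_combination (a + 2 * i + 2) * hA - (a + K + i + 2) * hB + ((K : ℝ) - i) * hC
  · rw [piw_succ_self, piwFlux_succ_succ_self, piw_self_eq_piwFlux, sub_zero]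

lemma sum_piw_eq_one (ha : -1 < a) (K : ℕ) : ∑ j ∈ Finset.range (K + 1), piw j K a b = 1 := by
  induction K with
  | zero => simp [piw]
  | succ K ih =>
    calc ∑ j ∈ Finset.range (K + 2), piw j (K + 1) a b
        = ∑ j ∈ Finset.range (K + 2),
            (piw j K a b + (piwFlux K a b j - piwFlux K a b (j + 1))) :=
          Finset.sum_congr rfl fun j hj => by
            linarith [piw_succ_sub_piw b ha (Nat.lt_succ_iff.1 (Finset.mem_range.1 hj))]
      _ = 1 := by
        rw [Finset.sum_add_distrib, Finset.sum_range_sub', Finset.sum_range_succ, ih,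
          piw_succ_self, piwFlux_zero, piwFlux_succ_succ_self]
        ring

lemma succ_mul_piw_succ_succ (ha : -1 < a) (j K : ℕ) :
    (j + 1) * (a + j + 1) * piw (j + 1) (K + 1) a b = (K + 1) * b * piw j K (a + 2) (b + 1) := by
  have hchoose : ((K + 1).choose (j + 1) : ℝ) * (j + 1) = (K + 1) * K.choose j := by
    exact_mod_cast (Nat.add_one_mul_choose_eq K j).symm
  have hb := poch_succ' b j
  have hlow := poch_succ' (a + (j + 1 : ℕ)) j
  simp only [piw_eq_div]
  rw [mul_div_assoc', mul_div_assoc',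
    div_eq_div_iff (piw_den_pos ha (j + 1) (K + 1)).ne'
      (piw_den_pos (by linarith : -1 < a + 2) j K).ne',
    Nat.add_sub_add_right]
  push_cast at *
  grind

lemma sum_mul_piw_succ (ha : -1 < a) (g : ℕ → ℝ) (K : ℕ) :
    ∑ j ∈ Finset.range (K + 2), (j : ℝ) * (a + j) * g j * piw j (K + 1) a b =
      (K + 1) * b * ∑ j ∈ Finset.range (K + 1), g (j + 1) * piw j K (a + 2) (b + 1) := by
  rw [Finset.sum_range_succ', Finset.mul_sum]
  refine (add_eq_left.2 (by simp)).trans (Finset.sum_congr rfl fun j _ => ?_)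
  push_cast
  linear_combination g (j + 1) * succ_mul_piw_succ_succ b ha j K

lemma sum_mul_piw_eq (ha : -1 < a) (K : ℕ) :
    ∑ j ∈ Finset.range (K + 1), (j : ℝ) * (a + j) * piw j K a b = K * b := by
  cases K with
  | zero => simp
  | succ K =>
    have h := sum_mul_piw_succ b ha (fun _ => 1) K
    simp only [mul_one, one_mul, sum_piw_eq_one _ (show -1 < a + 2 by linarith)] at h
    rw [h]
    push_cast
    ring

lemma sum_sq_mul_piw_eq (ha : -1 < a) (K : ℕ) :
    ∑ j ∈ Finset.range (K + 1), ((j : ℝ) * (a + j)) ^ 2 * piw j K a b =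
      K * b * ((K - 1) * (b + 1) + a + 1) := by
  cases K with
  | zero => simp
  | succ K =>
    have ha' : -1 < a + 2 := by linarith
    calc ∑ j ∈ Finset.range (K + 2), ((j : ℝ) * (a + j)) ^ 2 * piw j (K + 1) a b
        = ∑ j ∈ Finset.range (K + 2),
            (j : ℝ) * (a + j) * (j * (a + j)) * piw j (K + 1) a b := by
          simp only [sq, mul_assoc]
      _ = (K + 1) * b * ∑ j ∈ Finset.range (K + 1),
            ((j : ℝ) * (a + 2 + j) + (a + 1)) * piw j K (a + 2) (b + 1) := by
          rw [sum_mul_piw_succ b ha (fun j => j * (a + j))]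
          congr 1
          refine Finset.sum_congr rfl fun j _ => ?_
          push_cast
          ring
      _ = (K + 1) * b * (K * (b + 1) + (a + 1)) := by
          simp only [add_mul, Finset.sum_add_distrib, ← Finset.mul_sum, sum_mul_piw_eq _ ha',
            sum_piw_eq_one _ ha', mul_one]
      _ = _ := by
          push_cast
          ring

end Weights

theorem piw_mean_variance_general (K : ℕ) (a b : ℝ)
    (ha : a > -1) :
    (∑ j ∈ Finset.range (K + 1), (j : ℝ) * (a + j) * piw j K a b = K * b) ∧
    ((∑ j ∈ Finset.range (K + 1), ((j : ℝ) * (a + j))^2 * piw j K a b)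
        - ((K : ℝ) * b)^2 = K * (K + a - b) * b) := by
  refine ⟨sum_mul_piw_eq b ha K, ?_⟩
  rw [sum_sq_mul_piw_eq b ha K]
  ring

theorem piw_mean_variance (K : ℕ) (a b : ℝ)
    (ha : a > -1) (hb1 : 0 < b) (hb2 : b < a + 1)
    (hsum : ∑ j ∈ Finset.range (K + 1), piw j K a b = 1) :
    (∑ j ∈ Finset.range (K + 1), (j : ℝ) * (a + j) * piw j K a b = K * b) ∧
    ((∑ j ∈ Finset.range (K + 1), ((j : ℝ) * (a + j))^2 * piw j K a b)
        - ((K : ℝ) * b)^2 = K * (K + a - b) * b) :=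
  piw_mean_variance_general K a b ha
end
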